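/- If S is a supersymmetric numerical semigroup with multiplicity e, then its blowup B is symmetric. -/

import Mathlib

open Finset

/-- The set of factorizations of `n` over the generating tuple `g`. -/
def Fac {t : ℕ} (g : Fin (t + 1) → ℕ) (n : ℕ) : Set (Fin (t + 1) → ℕ) :=
  {c | ∑ i, c i * g i = n}

/-- The numerical semigroup generated by the tuple `g`. -/
def Sg {t : ℕ} (g : Fin (t + 1) → ℕ) : Set ℕ :=
  {n | ∃ c : Fin (t + 1) → ℕ, ∑ i, c i * g i = n}

/-- The order of `n`: the maximal length of a factorization of `n` over `g`. -/
noncomputable def ordOf {t : ℕ} (g : Fin (t + 1) → ℕ) (n : ℕ) : ℕ :=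
  sSup {r | ∃ c ∈ Fac g n, ∑ i, c i = r}

/-- The minimal length of a factorization of `n` over `g`. -/
noncomputable def minordOf {t : ℕ} (g : Fin (t + 1) → ℕ) (n : ℕ) : ℕ :=
  sInf {r | ∃ c ∈ Fac g n, ∑ i, c i = r}

/-- The denumerant of `n` with respect to `g`. -/
noncomputable def denum {t : ℕ} (g : Fin (t + 1) → ℕ) (n : ℕ) : ℕ :=
  (Fac g n).ncard

/-- The maximal denumerant of an element: the number of maximal-length factorizations. -/
noncomputable def dmaxEl {t : ℕ} (g : Fin (t + 1) → ℕ) (n : ℕ) : ℕ :=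
  {c ∈ Fac g n | ∑ i, c i = ordOf g n}.ncard

/-- The maximal denumerant of the semigroup generated by `g`. -/
noncomputable def dmax {t : ℕ} (g : Fin (t + 1) → ℕ) : ℕ :=
  sSup {m | ∃ n ∈ Sg g, dmaxEl g n = m}

/-- The generating tuple `D` of the blowup: `{e, a₁ - e, …, a_t - e}`. -/
def blowD {t : ℕ} (g : Fin (t + 1) → ℕ) : Fin (t + 1) → ℕ :=
  fun i => if i = 0 then g 0 else g i - g 0

/-- The adjustment of `n`:  `n - ord(n) * e`. -/
noncomputable def adj {t : ℕ} (g : Fin (t + 1) → ℕ) (n : ℕ) : ℕ :=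
  n - ordOf g n * g 0

/-- The Apery set with respect to `u` of the semigroup generated by `g`. -/
def Ap {t : ℕ} (g : Fin (t + 1) → ℕ) (u : ℕ) : Set ℕ :=
  {w ∈ Sg g | ¬ ∃ b ∈ Sg g, w = b + u}

/-- `g` is the (strictly increasing) minimal generating tuple of a numerical semigroup
with multiplicity `g 0`. -/
structure IsNumSgp {t : ℕ} (g : Fin (t + 1) → ℕ) : Prop where
  mono : StrictMono g
  pos : 0 < g 0
  gcd_eq_one : Finset.gcd Finset.univ g = 1
  minimal : ∀ i, ∀ c : Fin (t + 1) → ℕ, ∑ j, c j * g j = g i → c = Pi.single i 1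

/-- `S` is additive: `ord(u + e) = ord(u) + 1` for all `u ∈ S`. -/
def IsAdditive {t : ℕ} (g : Fin (t + 1) → ℕ) : Prop :=
  ∀ u ∈ Sg g, ordOf g (u + g 0) = ordOf g u + 1

/-- Membership of an integer in a set of naturals. -/
def ZMem (T : Set ℕ) (z : ℤ) : Prop := 0 ≤ z ∧ z.toNat ∈ T

/-- The Frobenius number: the largest integer not in `T`. -/
noncomputable def Frob (T : Set ℕ) : ℤ := sSup {z : ℤ | ¬ ZMem T z}

/-- `T` is symmetric: whenever `x + y = F(T)`, exactly one of `x`, `y` lies in `T`. -/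
def Symm (T : Set ℕ) : Prop := ∀ x y : ℤ, x + y = Frob T → (ZMem T x ↔ ¬ ZMem T y)

/-- An abstract numerical semigroup. -/
structure IsNumSemigroup (T : Set ℕ) : Prop where
  zero_mem : 0 ∈ T
  add_mem : ∀ a ∈ T, ∀ b ∈ T, a + b ∈ T
  cofinite : Tᶜ.Finite

/-- The Apery set of an abstract numerical semigroup. -/
def ApS (T : Set ℕ) (u : ℕ) : Set ℕ := {w ∈ T | ¬ ∃ b ∈ T, w = b + u}

/-! Additivity gives `ord (u + q e) = ord u + q`, so every element of `S` is `wᵢ + q e` with order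
`ord wᵢ + q`. Since `n` lies in the blowup exactly when `n + k e ∈ S` for some `k ≤ ord (n + k e)`,
the blowup is the union of the progressions `adj wᵢ + eℕ`, where `adj wᵢ = wᵢ - ord(wᵢ) e ≡ wᵢ`;
these bases run over all residues mod `e`, so they form the Apéry set of the blowup.
Supersymmetry says precisely that `adj wᵢ + adj w_{e-1-i} = adj w_{e-1}`, and a semigroup whose
Apéry set pairs up to its maximum `M` in this way is symmetric with Frobenius number `M - e`. -/

section ArithmeticProgressions

variable {ι : Type*} {T : Set ℕ} {e : ℕ} {a : ι → ℕ}

theorem Int.le_of_intCast_zmod_eq_of_sub_lt [NeZero e] {y : ℕ} {z : ℤ} (h : (z : ZMod e) = y)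
    (hlt : y - e < z) : y ≤ z := by
  obtain ⟨k, hk⟩ := (ZMod.intCast_eq_intCast_iff_dvd_sub y z e).mp (by simpa using h.symm)
  have he : (0 : ℤ) < e := by exact_mod_cast NeZero.pos e
  have hk0 : 0 ≤ k := by
    by_contra! hneg
    nlinarith [show k ≤ -1 by omega]
  nlinarith

theorem zmem_iff_le (hT : ∀ n, n ∈ T ↔ ∃ i, ∃ r, n = a i + r * e)
    (ha : Function.Injective fun i => (a i : ZMod e)) {z : ℤ} {i : ι}
    (hz : (z : ZMod e) = a i) : ZMem T z ↔ (a i : ℤ) ≤ z := by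
  constructor
  · rintro ⟨hz0, hmem⟩
    lift z to ℕ using hz0
    obtain ⟨j, r, rfl⟩ := (hT _).mp (by simpa using hmem)
    have hji : j = i := ha (by simpa [ZMod.natCast_self] using hz)
    subst hji
    exact_mod_cast Nat.le_add_right _ _
  · intro hle
    lift z to ℕ using (Nat.cast_nonneg _).trans hle
    have hle' : a i ≤ z := by exact_mod_cast hle
    obtain ⟨r, hr⟩ := (Nat.modEq_iff_dvd' hle').mp ((ZMod.natCast_eq_natCast_iff _ _ _).mp
      (by exact_mod_cast hz.symm))
    exact ⟨Nat.cast_nonneg _, (hT _).mpr ⟨i, r, by simp only [Int.toNat_natCast]; grind⟩⟩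

theorem frob_eq_of_forall_le [NeZero e] (hT : ∀ n, n ∈ T ↔ ∃ i, ∃ r, n = a i + r * e)
    (ha : Function.Bijective fun i => (a i : ZMod e)) {m : ι} (hm : ∀ i, a i ≤ a m) :
    Frob T = a m - e := by
  have he : (0 : ℤ) < e := by exact_mod_cast NeZero.pos e
  refine IsGreatest.csSup_eq ⟨?_, fun z hz => ?_⟩
  · have hres : (((a m - e : ℤ)) : ZMod e) = a m := by simp
    simp only [Set.mem_ofPred_eq, zmem_iff_le hT ha.1 hres]
    linarith
  · by_contra! hlt
    obtain ⟨i, hi⟩ : ∃ i, (a i : ZMod e) = z := ha.2 _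
    refine hz ((zmem_iff_le hT ha.1 hi.symm).mpr
      (Int.le_of_intCast_zmod_eq_of_sub_lt hi.symm ?_))
    have := hm i
    omega

theorem symm_of_forall_add_eq [NeZero e] (hT : ∀ n, n ∈ T ↔ ∃ i, ∃ r, n = a i + r * e)
    (ha : Function.Bijective fun i => (a i : ZMod e)) {m : ι}
    (hpair : ∀ i, ∃ j, a i + a j = a m) : Symm T := by
  have he : (0 : ℤ) < e := by exact_mod_cast NeZero.pos e
  have hm : ∀ i, a i ≤ a m := fun i => by obtain ⟨j, hj⟩ := hpair i; omega
  intro x y hxy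
  rw [frob_eq_of_forall_le hT ha hm] at hxy
  obtain ⟨i, hx⟩ : ∃ i, (a i : ZMod e) = x := ha.2 _
  obtain ⟨j, hij⟩ := hpair i
  have hij' : (a i : ℤ) + a j = a m := by exact_mod_cast hij
  have hy : (y : ZMod e) = a j := by
    rw [eq_sub_of_add_eq' hxy, ← hij]
    simp [← hx]
  rw [zmem_iff_le hT ha.1 hx.symm, zmem_iff_le hT ha.1 hy, not_le]
  constructor
  · intro h
    linarith
  · intro h
    exact Int.le_of_intCast_zmod_eq_of_sub_lt hx.symm (by linarith)

end ArithmeticProgressions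

section Factorizations

variable {t : ℕ} {g : Fin (t + 1) → ℕ}

theorem IsNumSgp.pos_apply (hS : IsNumSgp g) (i : Fin (t + 1)) : 0 < g i :=
  hS.pos.trans_le (hS.mono.monotone (Fin.zero_le i))

theorem add_mem_Sg {a b : ℕ} (ha : a ∈ Sg g) (hb : b ∈ Sg g) : a + b ∈ Sg g := by
  obtain ⟨c, rfl⟩ := ha
  obtain ⟨d, rfl⟩ := hb
  exact ⟨c + d, by simp only [Pi.add_apply, add_mul, sum_add_distrib]⟩

theorem mul_mem_Sg (k : ℕ) (i : Fin (t + 1)) : k * g i ∈ Sg g :=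
  ⟨Pi.single i k, by simp [Pi.single_apply]⟩

theorem isGreatest_ordOf (hg : ∀ i, 0 < g i) {n : ℕ} (hn : n ∈ Sg g) :
    IsGreatest {r | ∃ c ∈ Fac g n, ∑ i, c i = r} (ordOf g n) := by
  have hbdd : BddAbove {r | ∃ c ∈ Fac g n, ∑ i, c i = r} := by
    refine ⟨n, ?_⟩
    rintro _ ⟨c, hc, rfl⟩
    calc ∑ i, c i ≤ ∑ i, c i * g i := sum_le_sum fun i _ => Nat.le_mul_of_pos_right _ (hg i)
      _ = n := hc
  obtain ⟨c, hc⟩ := hn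
  exact ⟨Nat.sSup_mem ⟨_, c, hc, rfl⟩ hbdd, fun r hr => le_csSup hbdd hr⟩

theorem exists_fac_sum_eq_ordOf (hg : ∀ i, 0 < g i) {n : ℕ} (hn : n ∈ Sg g) :
    ∃ c ∈ Fac g n, ∑ i, c i = ordOf g n :=
  (isGreatest_ordOf hg hn).1

theorem sum_le_ordOf (hg : ∀ i, 0 < g i) {n : ℕ} {c : Fin (t + 1) → ℕ} (hc : c ∈ Fac g n) :
    ∑ i, c i ≤ ordOf g n :=
  (isGreatest_ordOf hg ⟨c, hc⟩).2 ⟨c, hc, rfl⟩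

theorem adj_add_ordOf_mul (hS : IsNumSgp g) {n : ℕ} (hn : n ∈ Sg g) :
    adj g n + ordOf g n * g 0 = n := by
  obtain ⟨c, hc, hlen⟩ := exists_fac_sum_eq_ordOf hS.pos_apply hn
  have hle : ordOf g n * g 0 ≤ n :=
    calc ordOf g n * g 0 = ∑ i, c i * g 0 := by rw [← sum_mul, hlen]
      _ ≤ ∑ i, c i * g i :=
        sum_le_sum fun i _ => Nat.mul_le_mul_left _ (hS.mono.monotone (Fin.zero_le i))
      _ = n := hc
  exact Nat.sub_add_cancel hle

theorem adj_add_adj_eq (hS : IsNumSgp g) {u v s : ℕ} (hu : u ∈ Sg g) (hv : v ∈ Sg g)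
    (hs : s ∈ Sg g) (hsum : u + v = s) (hord : ordOf g u + ordOf g v = ordOf g s) :
    adj g u + adj g v = adj g s := by
  have := adj_add_ordOf_mul hS hu
  have := adj_add_ordOf_mul hS hv
  have := adj_add_ordOf_mul hS hs
  have : ordOf g u * g 0 + ordOf g v * g 0 = ordOf g s * g 0 := by rw [← add_mul, hord]
  omega

theorem IsAdditive.ordOf_add_mul (hadd : IsAdditive g) {u : ℕ} (hu : u ∈ Sg g) (r : ℕ) :
    ordOf g (u + r * g 0) = ordOf g u + r := by
  induction r with
  | zero => simp
  | succ r ih =>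
    rw [add_one_mul, ← add_assoc, hadd _ (add_mem_Sg hu (mul_mem_Sg r 0)), ih, add_assoc]

theorem exists_mem_Ap_add_mul (he : 0 < g 0) {n : ℕ} (hn : n ∈ Sg g) :
    ∃ a ∈ Ap g (g 0), ∃ q, n = a + q * g 0 := by
  induction n using Nat.strong_induction_on with
  | _ n ih =>
    by_cases hsub : ∃ b ∈ Sg g, n = b + g 0
    · obtain ⟨b, hb, rfl⟩ := hsub
      obtain ⟨a, ha, q, rfl⟩ := ih b (by omega) hb
      exact ⟨a, ha, q + 1, by ring⟩
    · exact ⟨n, ⟨hn, hsub⟩, 0, by simp⟩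

theorem eq_of_mem_Ap_of_modEq {a b : ℕ} (ha : a ∈ Ap g (g 0)) (hb : b ∈ Ap g (g 0))
    (h : a ≡ b [MOD g 0]) : a = b := by
  wlog hab : a ≤ b generalizing a b
  · exact (this hb ha h.symm (by omega)).symm
  obtain ⟨m, hm⟩ := (Nat.modEq_iff_dvd' hab).mp h
  rcases m with _ | m
  · omega
  · refine absurd ⟨a + m * g 0, add_mem_Sg ha.1 (mul_mem_Sg m 0), ?_⟩ hb.2
    rw [Nat.sub_eq_iff_eq_add hab] at hm
    rw [hm]
    ring

end Factorizations

section Blowup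

variable {t : ℕ} {g : Fin (t + 1) → ℕ}

theorem sum_mul_eq_sum_mul_blowD_add (hm : Monotone g) (c : Fin (t + 1) → ℕ) :
    ∑ i, c i * g i = ∑ i, c i * blowD g i + (∑ i : Fin t, c i.succ) * g 0 := by
  have hsucc : ∀ i : Fin t, c i.succ * g i.succ = c i.succ * blowD g i.succ + c i.succ * g 0 := by
    intro i
    rw [blowD, if_neg (Fin.succ_ne_zero i), ← mul_add, Nat.sub_add_cancel (hm (Fin.zero_le _))]
  simp only [Fin.sum_univ_succ (f := fun i => c i * _), hsucc, sum_add_distrib, sum_mul, blowD,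
    if_pos]
  ring

theorem mem_Sg_blowD_iff (hS : IsNumSgp g) {n : ℕ} :
    n ∈ Sg (blowD g) ↔ ∃ k, n + k * g 0 ∈ Sg g ∧ k ≤ ordOf g (n + k * g 0) := by
  have hsum := sum_mul_eq_sum_mul_blowD_add hS.mono.monotone
  constructor
  · rintro ⟨c, rfl⟩
    refine ⟨∑ i : Fin t, c i.succ, ⟨c, hsum c⟩, ?_⟩
    calc ∑ i : Fin t, c i.succ ≤ ∑ i, c i := by rw [Fin.sum_univ_succ]; omega
      _ ≤ _ := sum_le_ordOf hS.pos_apply (hsum c)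
  · rintro ⟨k, hs, hk⟩
    obtain ⟨c, hc, hlen⟩ := exists_fac_sum_eq_ordOf hS.pos_apply hs
    -- the blowup weight of `c` is `n + k e - m e`, `m` its tail sum, so replacing `c 0` by
    -- `c 0 + m - k` brings it to `n`
    obtain ⟨j, hj⟩ : ∃ j, c 0 + ∑ i : Fin t, c i.succ = k + j :=
      ⟨c 0 + ∑ i : Fin t, c i.succ - k, by rw [Fin.sum_univ_succ] at hlen; omega⟩
    refine ⟨Fin.cons j (Fin.tail c), ?_⟩
    have hc' := hsum (Fin.cons j (Fin.tail c))
    have hc0 : c 0 * g 0 + ∑ i : Fin t, c i.succ * g i.succ = n + k * g 0 := by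
      rw [← Fin.sum_univ_succ (f := fun i => c i * g i)]
      exact hc
    simp only [Fin.sum_univ_succ (f := fun i => Fin.cons j (Fin.tail c) i * g i),
      Fin.cons_zero, Fin.cons_succ, Fin.tail] at hc'
    have hje : c 0 * g 0 + (∑ i : Fin t, c i.succ) * g 0 = k * g 0 + j * g 0 := by
      rw [← add_mul, ← add_mul, hj]
    linarith

theorem mem_Sg_blowD_iff_exists_adj (hS : IsNumSgp g) (hadd : IsAdditive g) {n : ℕ} :
    n ∈ Sg (blowD g) ↔ ∃ a ∈ Ap g (g 0), ∃ r, n = adj g a + r * g 0 := by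
  rw [mem_Sg_blowD_iff hS]
  constructor
  · rintro ⟨k, hs, hk⟩
    obtain ⟨a, ha, q, hq⟩ := exists_mem_Ap_add_mul hS.pos hs
    rw [hq, hadd.ordOf_add_mul ha.1] at hk
    obtain ⟨r, hr⟩ := Nat.exists_eq_add_of_le hk
    have hadj := adj_add_ordOf_mul hS ha.1
    have hre : (ordOf g a + q) * g 0 = k * g 0 + r * g 0 := by rw [hr, add_mul]
    refine ⟨a, ha, r, ?_⟩
    linarith
  · rintro ⟨a, ha, r, rfl⟩
    have hs : adj g a + r * g 0 + ordOf g a * g 0 = a + r * g 0 := by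
      have := adj_add_ordOf_mul hS ha.1
      omega
    refine ⟨ordOf g a, ?_, ?_⟩ <;> rw [hs]
    · exact add_mem_Sg ha.1 (mul_mem_Sg r 0)
    · rw [hadd.ordOf_add_mul ha.1]
      omega

theorem bijective_natCast_adj [NeZero (g 0)] (hS : IsNumSgp g) {w : Fin (g 0) → ℕ}
    (hw : Function.Injective w) (hrange : Set.range w = Ap g (g 0)) :
    Function.Bijective fun i => (adj g (w i) : ZMod (g 0)) := by
  have hwAp : ∀ i, w i ∈ Ap g (g 0) := fun i => hrange ▸ Set.mem_range_self i
  have hcast : ∀ i, (adj g (w i) : ZMod (g 0)) = w i := fun i =>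
    calc (adj g (w i) : ZMod (g 0)) = ((adj g (w i) + ordOf g (w i) * g 0 : ℕ) : ZMod (g 0)) := by
          simp
      _ = w i := by rw [adj_add_ordOf_mul hS (hwAp i).1]
  refine (Fintype.bijective_iff_injective_and_card _).mpr ⟨fun i j hij => hw ?_, by simp⟩
  refine eq_of_mem_Ap_of_modEq (hwAp i) (hwAp j) ((ZMod.natCast_eq_natCast_iff _ _ _).mp ?_)
  simpa only [hcast] using hij

end Blowup

/-- Lemma 4.12: the blowup of a supersymmetric semigroup is symmetric. -/
theorem stmt15 {t : ℕ} (g : Fin (t + 1) → ℕ) (hS : IsNumSgp g)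
    (w : Fin (g 0) → ℕ) (hw : StrictMono w) (hrange : Set.range w = Ap g (g 0))
    (hadd : IsAdditive g)
    (hsup : ∀ i j : Fin (g 0), (i : ℕ) + (j : ℕ) + 1 = g 0 →
      w i + w j = w ⟨g 0 - 1, Nat.sub_lt hS.pos one_pos⟩ ∧
      ordOf g (w i) + ordOf g (w j) = ordOf g (w ⟨g 0 - 1, Nat.sub_lt hS.pos one_pos⟩)) :
    Symm (Sg (blowD g)) := by
  have : NeZero (g 0) := ⟨hS.pos.ne'⟩
  have hwS : ∀ i, w i ∈ Sg g := fun i => (hrange ▸ Set.mem_range_self i : w i ∈ Ap g (g 0)).1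
  have hB : ∀ n, n ∈ Sg (blowD g) ↔ ∃ i, ∃ r, n = adj g (w i) + r * g 0 := fun n => by
    simp only [mem_Sg_blowD_iff_exists_adj hS hadd, ← hrange, Set.exists_range_iff]
  refine symm_of_forall_add_eq hB (bijective_natCast_adj hS hw.injective hrange)
    (m := ⟨g 0 - 1, Nat.sub_lt hS.pos one_pos⟩) fun i => ⟨i.rev, ?_⟩
  obtain ⟨hsum, hord⟩ := hsup i i.rev (by rw [Fin.val_rev]; omega)
  exact adj_add_adj_eq hS (hwS i) (hwS i.rev) (hwS _) hsum hord
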